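/- arXiv:math/9912221 — 6 statements merged into one kernel-verified Lean document; each statement's English description precedes it below -/
import Mathlib

section
/- Let R be a ring and let C be a wide subcategory of the category of left R-modules. Then the full subcategory f(C) of the derived category D(R), consisting of all small objects X such that H_n X lies in C for every integer n, is a thick subcategory: it is closed under shifts and direct summands, and for any exact triangle X → Y → Z → ΣX in which two of X, Y, Z lie in f(C), so does the third. -/
open CategoryTheory CategoryTheory.Limits CategoryTheory.Pretriangulated ZeroObject

universe w u

structure IsWideSubcategory {A : Type*} [Category A] [Abelian A] (C : Set A) : Prop where
  mem_of_iso : ∀ {X Y : A}, (X ≅ Y) → X ∈ C → Y ∈ C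
  kernel_mem : ∀ {X Y : A} (f : X ⟶ Y), X ∈ C → Y ∈ C → kernel f ∈ C
  cokernel_mem : ∀ {X Y : A} (f : X ⟶ Y), X ∈ C → Y ∈ C → cokernel f ∈ C
  extension_mem : ∀ (S : CategoryTheory.ShortComplex A), S.ShortExact →
    S.X₁ ∈ C → S.X₃ ∈ C → S.X₂ ∈ C

-- retract closure
lemma IsWideSubcategory.retract_mem {A : Type*} [Category A] [Abelian A] {C : Set A}
    (hC : IsWideSubcategory C) {X Y : A} (i : X ⟶ Y) (r : Y ⟶ X) (hir : i ≫ r = 𝟙 X)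
    (hY : Y ∈ C) : X ∈ C := by
  set e : Y ⟶ Y := 𝟙 Y - r ≫ i with he
  have h1 : i ≫ e = 0 := by
    rw [he, Preadditive.comp_sub, Category.comp_id, ← Category.assoc, hir,
      Category.id_comp, sub_self]
  refine hC.mem_of_iso (Y := X) ?_ (hC.kernel_mem e hY hY)
  refine ⟨kernel.ι e ≫ r, kernel.lift e i h1, ?_, ?_⟩
  · have h2 : kernel.ι e ≫ r ≫ i = kernel.ι e := by
      have := kernel.condition e
      rw [he, Preadditive.comp_sub, Category.comp_id, sub_eq_zero] at this
      exact this.symm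
    rw [← cancel_mono (kernel.ι e)]
    simp [Category.assoc, kernel.lift_ι, h2]
  · rw [← Category.assoc, kernel.lift_ι, hir]

-- the four-term exactness lemma
lemma IsWideSubcategory.mem_of_exact {A : Type*} [Category A] [Abelian A] {C : Set A}
    (hC : IsWideSubcategory C) {W X Y Z V : A}
    (d : W ⟶ X) (f : X ⟶ Y) (g : Y ⟶ Z) (h : Z ⟶ V)
    (w1 : d ≫ f = 0) (w2 : f ≫ g = 0) (w3 : g ≫ h = 0)
    (e1 : (ShortComplex.mk d f w1).Exact)
    (e2 : (ShortComplex.mk f g w2).Exact)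
    (e3 : (ShortComplex.mk g h w3).Exact)
    (hW : W ∈ C) (hX : X ∈ C) (hZ : Z ∈ C) (hV : V ∈ C) : Y ∈ C := by
  have hf' : Mono (cokernel.desc d f w1) :=
    ((ShortComplex.mk d f w1).exact_iff_mono_cokernel_desc).1 e1
  have hg' : Epi (kernel.lift h g w3) :=
    ((ShortComplex.mk g h w3).exact_iff_epi_kernel_lift).1 e3
  have wS : cokernel.desc d f w1 ≫ kernel.lift h g w3 = 0 := by
    rw [← cancel_epi (cokernel.π d), ← cancel_mono (kernel.ι h)]
    simp [w2]
  set S : ShortComplex A := ShortComplex.mk _ _ wS with hS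
  -- S exact: transfer exactness from e2 in two steps
  have wa : cokernel.desc d f w1 ≫ g = 0 := by
    rw [← cancel_epi (cokernel.π d)]; simp [w2]
  have ea : (ShortComplex.mk (cokernel.desc d f w1) g wa).Exact := by
    let φ : ShortComplex.mk f g w2 ⟶ ShortComplex.mk (cokernel.desc d f w1) g wa :=
      { τ₁ := cokernel.π d, τ₂ := 𝟙 _, τ₃ := 𝟙 _ }
    haveI : Epi φ.τ₁ := by dsimp [φ]; infer_instance
    haveI : IsIso φ.τ₂ := by dsimp [φ]; infer_instance
    haveI : Mono φ.τ₃ := by dsimp [φ]; infer_instance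
    exact (ShortComplex.exact_iff_of_epi_of_isIso_of_mono φ).1 e2
  have eS : S.Exact := by
    let φ : S ⟶ ShortComplex.mk (cokernel.desc d f w1) g wa :=
      { τ₁ := 𝟙 _, τ₂ := 𝟙 _, τ₃ := kernel.ι h,
        comm₂₃ := by simp [hS, S] }
    haveI : Epi φ.τ₁ := by dsimp [φ]; infer_instance
    haveI : IsIso φ.τ₂ := by dsimp [φ]; infer_instance
    haveI : Mono φ.τ₃ := by dsimp [φ]; infer_instance
    exact (ShortComplex.exact_iff_of_epi_of_isIso_of_mono φ).2 ea
  exact hC.extension_mem S (ShortComplex.ShortExact.mk' eS hf' hg')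
    (hC.cokernel_mem d hW hX) (hC.kernel_mem h hZ hV)

structure IsThickSubcategory {T : Type*} [Category T] [HasZeroObject T] [Preadditive T]
    [HasShift T ℤ] [∀ n : ℤ, (shiftFunctor T n).Additive] [Pretriangulated T]
    (D : Set T) : Prop where
  mem_of_iso : ∀ {X Y : T}, (X ≅ Y) → X ∈ D → Y ∈ D
  zero_mem : (0 : T) ∈ D
  shift_mem : ∀ (X : T) (n : ℤ), X ∈ D → X⟦n⟧ ∈ D
  ext₂ : ∀ (T' : Triangle T), T' ∈ (distTriang T) → T'.obj₁ ∈ D → T'.obj₃ ∈ D → T'.obj₂ ∈ D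
  retract_mem : ∀ (X Y : T) (i : X ⟶ Y) (r : Y ⟶ X), i ≫ r = 𝟙 X → Y ∈ D → X ∈ D

def IsSmallObject {R : Type u} [Ring R] [HasDerivedCategory.{w} (ModuleCat.{u} R)]
    (X : DerivedCategory (ModuleCat.{u} R)) : Prop :=
  ∀ D : Set (DerivedCategory (ModuleCat.{u} R)), IsThickSubcategory D →
    (DerivedCategory.singleFunctor (ModuleCat.{u} R) 0).obj (ModuleCat.of R R) ∈ D → X ∈ D

def fSet {R : Type u} [Ring R] [HasDerivedCategory.{w} (ModuleCat.{u} R)]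
    (C : Set (ModuleCat.{u} R)) : Set (DerivedCategory (ModuleCat.{u} R)) :=
  {X | IsSmallObject X ∧
    ∀ n : ℤ, (DerivedCategory.homologyFunctor (ModuleCat.{u} R) n).obj X ∈ C}

section aux
variable {R : Type u} [Ring R] [HasDerivedCategory.{w} (ModuleCat.{u} R)]
  {C : Set (ModuleCat.{u} R)}

-- homology of a shift
noncomputable def homologyShiftIso (X : DerivedCategory (ModuleCat.{u} R)) (m n : ℤ) :
    (DerivedCategory.homologyFunctor (ModuleCat.{u} R) n).obj (X⟦m⟧) ≅
      (DerivedCategory.homologyFunctor (ModuleCat.{u} R) (m + n)).obj X :=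
  ((DerivedCategory.homologyFunctor (ModuleCat.{u} R) 0).shiftIso m n (m + n) rfl).app X

lemma fSet_shift (hC : IsWideSubcategory C) {X : DerivedCategory (ModuleCat.{u} R)}
    (hX : X ∈ fSet C) (m : ℤ) : X⟦m⟧ ∈ fSet C := by
  obtain ⟨hs, hh⟩ := hX
  refine ⟨fun D hD hR => hD.shift_mem X m (hs D hD hR), fun n => ?_⟩
  exact hC.mem_of_iso (homologyShiftIso X m n).symm (hh (m + n))

lemma fSet_mem₂ (hC : IsWideSubcategory C)
    (T' : Triangle (DerivedCategory (ModuleCat.{u} R))) (hT : T' ∈ distTriang _)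
    (h1 : T'.obj₁ ∈ fSet C) (h3 : T'.obj₃ ∈ fSet C) : T'.obj₂ ∈ fSet C := by
  obtain ⟨hs1, hh1⟩ := h1
  obtain ⟨hs3, hh3⟩ := h3
  refine ⟨fun D hD hR => hD.ext₂ T' hT (hs1 D hD hR) (hs3 D hD hR), fun n => ?_⟩
  exact hC.mem_of_exact
    (DerivedCategory.HomologySequence.δ T' (n - 1) n (by ring))
    ((DerivedCategory.homologyFunctor _ n).map T'.mor₁)
    ((DerivedCategory.homologyFunctor _ n).map T'.mor₂)
    (DerivedCategory.HomologySequence.δ T' n (n + 1) rfl)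
    _ _ _
    (DerivedCategory.HomologySequence.exact₁ T' hT (n - 1) n (by ring))
    (DerivedCategory.HomologySequence.exact₂ T' hT n)
    (DerivedCategory.HomologySequence.exact₃ T' hT n (n + 1) rfl)
    (hh3 (n - 1)) (hh1 n) (hh3 n) (hh1 (n + 1))

end aux

/-- Proposition 1.2 of Hovey, "Classifying subcategories of modules":
if `C` is a wide subcategory of `R`-modules, then `f(C)`, the collection of small objects
`X` of the derived category `D(R)` with `Hₙ X ∈ C` for all `n`, is a thick subcategory:
it is closed under shifts and direct summands (retracts), and in any distinguished
triangle two of whose terms lie in `f(C)`, the third does as well. -/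
theorem wide_gives_thick (R : Type u) [Ring R] [HasDerivedCategory.{w} (ModuleCat.{u} R)]
    (C : Set (ModuleCat.{u} R)) (hC : IsWideSubcategory C) :
    (∀ (X : DerivedCategory (ModuleCat.{u} R)) (n : ℤ), X ∈ fSet C → X⟦n⟧ ∈ fSet C) ∧
    (∀ (X Y : DerivedCategory (ModuleCat.{u} R)) (i : X ⟶ Y) (r : Y ⟶ X),
      i ≫ r = 𝟙 X → Y ∈ fSet C → X ∈ fSet C) ∧
    (∀ (T' : Triangle (DerivedCategory (ModuleCat.{u} R))), T' ∈ (distTriang _) →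
      (T'.obj₁ ∈ fSet C → T'.obj₂ ∈ fSet C → T'.obj₃ ∈ fSet C) ∧
      (T'.obj₁ ∈ fSet C → T'.obj₃ ∈ fSet C → T'.obj₂ ∈ fSet C) ∧
      (T'.obj₂ ∈ fSet C → T'.obj₃ ∈ fSet C → T'.obj₁ ∈ fSet C)) := by
  refine ⟨fun X n hX => fSet_shift hC hX n, ?_, ?_⟩
  · intro X Y i r hir ⟨hs, hh⟩
    refine ⟨fun D hD hR => hD.retract_mem X Y i r hir (hs D hD hR), fun n => ?_⟩
    exact hC.retract_mem ((DerivedCategory.homologyFunctor _ n).map i)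
      ((DerivedCategory.homologyFunctor _ n).map r)
      (by rw [← Functor.map_comp, hir, CategoryTheory.Functor.map_id]) (hh n)
  · intro T' hT
    refine ⟨fun h1 h2 => ?_, fun h1 h3 => fSet_mem₂ hC T' hT h1 h3, fun h2 h3 => ?_⟩
    · exact fSet_mem₂ hC T'.rotate (rot_of_distTriang T' hT) h2 (fSet_shift hC h1 1)
    · exact fSet_mem₂ hC T'.invRotate (inv_rot_of_distTriang T' hT)
        (fSet_shift hC h3 (-1)) h2
end

section
/- Let R be a ring. For every wide subcategory C of C_0 and every thick subcategory D of the small objects of D(R), one has g(D) ⊆ C if and only if D ⊆ f(C). In other words, the order-preserving map g is left adjoint to the order-preserving map f between the lattice of thick subcategories of small objects of D(R) and the lattice of wide subcategories of C_0. -/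
open CategoryTheory CategoryTheory.Limits CategoryTheory.Pretriangulated ZeroObject

universe w u

/-- The wide subcategory generated by a set of objects: the intersection of all
wide subcategories containing it. -/
def wideClosure {A : Type*} [Category A] [Abelian A] (S : Set A) : Set A :=
  ⋂₀ {C : Set A | IsWideSubcategory C ∧ S ⊆ C}

/-- `C₀`, the wide subcategory of `R`-modules generated by the module `R`. -/
def wideSubcatGenByRing (R : Type u) [Ring R] : Set (ModuleCat.{u} R) :=
  wideClosure {ModuleCat.of R R}

/-- The map `g` : it sends a thick subcategory `D` to the wide subcategory generated by
the homology modules `Hₙ X` for `X ∈ D` and `n : ℤ`. -/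
def gSet {R : Type u} [Ring R] [HasDerivedCategory.{w} (ModuleCat.{u} R)]
    (D : Set (DerivedCategory (ModuleCat.{u} R))) : Set (ModuleCat.{u} R) :=
  wideClosure {M | ∃ X ∈ D, ∃ n : ℤ,
    Nonempty ((DerivedCategory.homologyFunctor (ModuleCat.{u} R) n).obj X ≅ M)}

/-- Proposition 1.4: `g` is left adjoint to `f`: for a wide subcategory
`C` of `C₀` and a thick subcategory `D` of small objects of `D(R)`, we have
`g(D) ⊆ C` if and only if `D ⊆ f(C)`. -/
theorem g_left_adjoint_to_f (R : Type u) [Ring R]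
    [HasDerivedCategory.{w} (ModuleCat.{u} R)]
    (C : Set (ModuleCat.{u} R)) (hC : IsWideSubcategory C)
    (hC₀ : C ⊆ wideSubcatGenByRing R)
    (D : Set (DerivedCategory (ModuleCat.{u} R))) (hD : IsThickSubcategory D)
    (hDsmall : ∀ X ∈ D, IsSmallObject X) :
    gSet D ⊆ C ↔ D ⊆ fSet C := by
  constructor
  · intro h X hX
    refine ⟨hDsmall X hX, fun n => h ?_⟩
    intro C' hC'
    exact hC'.2 ⟨X, hX, n, ⟨Iso.refl _⟩⟩
  · intro h M hM
    refine hM C ⟨hC, ?_⟩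
    rintro M ⟨X, hX, n, ⟨e⟩⟩
    exact hC.mem_of_iso e ((h hX).2 n)
end

section
/- Let R be a left coherent ring and let C_0 denote the wide subcategory of finitely presented R-modules. Then gf(C_0) = C_0: every finitely presented R-module lies in the wide subcategory generated by the homology modules of the small objects X of D(R) all of whose homology modules are finitely presented. -/
open CategoryTheory CategoryTheory.Limits CategoryTheory.Pretriangulated ZeroObject

universe w u

/-- A ring is left coherent if every finitely generated left ideal is finitely
presented as a module. -/
def IsLeftCoherentRing (R : Type u) [Ring R] : Prop :=
  ∀ I : Ideal R, I.FG → Module.FinitePresentation R I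

/-- The collection of finitely presented `R`-modules. -/
def finPresModules (R : Type u) [Ring R] : Set (ModuleCat.{u} R) :=
  {M : ModuleCat.{u} R | Module.FinitePresentation R M}

set_option synthInstance.maxHeartbeats 1000000
set_option maxHeartbeats 1000000

section Algebra

variable {R : Type u} [Ring R]

/-- Finite presentation transfers along linear equivalences. -/
lemma fp_of_linearEquiv {M N : Type*} [AddCommGroup M] [Module R M] [AddCommGroup N]
    [Module R N] [Module.FinitePresentation R M] (e : M ≃ₗ[R] N) :
    Module.FinitePresentation R N :=
  Module.finitePresentation_of_surjective e.toLinearMap e.surjective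
    (by rw [LinearEquiv.ker]; exact Submodule.fg_bot)

lemma fp_of_subsingleton (M : Type*) [AddCommGroup M] [Module R M] [Subsingleton M] :
    Module.FinitePresentation R M :=
  Module.finitePresentation_of_surjective (0 : R →ₗ[R] M)
    (fun x => ⟨0, Subsingleton.elim _ _⟩)
    (by rw [LinearMap.ker_zero]; exact Module.Finite.fg_top)


/-- Over a left coherent ring, finitely generated submodules of finite free modules
are finitely presented. -/
lemma coherent_fg_submodule_free_fp (hR : IsLeftCoherentRing R) :
    ∀ (n : ℕ) (S : Submodule R (Fin n → R)), S.FG → Module.FinitePresentation R S := by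
  intro n
  induction n with
  | zero =>
    intro S _
    have : Subsingleton S := ⟨fun a b => Subtype.ext (Subsingleton.elim _ _)⟩
    exact fp_of_subsingleton S
  | succ n IH =>
    intro S hS
    set π : (Fin (n + 1) → R) →ₗ[R] (Fin n → R) := LinearMap.funLeft R R Fin.succ with hπ
    have hTfp : Module.FinitePresentation R (S.map π) := IH (S.map π) (hS.map π)
    let p : S →ₗ[R] S.map π := π.restrict (fun x hx => Submodule.mem_map_of_mem hx)
    have hp : Function.Surjective p := by
      rintro ⟨y, hy⟩
      obtain ⟨x, hx, rfl⟩ := hy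
      exact ⟨⟨x, hx⟩, rfl⟩
    haveI : Module.Finite R S := Module.Finite.iff_fg.mpr hS
    haveI := hTfp
    have hker : (LinearMap.ker p).FG := Module.FinitePresentation.fg_ker p hp
    let q : LinearMap.ker p →ₗ[R] R :=
      (LinearMap.proj (0 : Fin (n + 1))).comp (S.subtype.comp (LinearMap.ker p).subtype)
    have hq : Function.Injective q := by
      rintro ⟨⟨v, hv⟩, hvk⟩ ⟨⟨w, hw⟩, hwk⟩ h
      have hv0 : (v : Fin (n + 1) → R) 0 = w 0 := h
      have hvk' : π v = π w := by
        have h1 : (p ⟨v, hv⟩ : Fin n → R) = π v := rfl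
        have h2 : (p ⟨w, hw⟩ : Fin n → R) = π w := rfl
        rw [LinearMap.mem_ker] at hvk hwk
        rw [← h1, ← h2, hvk, hwk]
      ext1; ext1
      funext i
      refine Fin.cases ?_ ?_ i
      · exact hv0
      · intro j
        exact congrFun hvk' j
    haveI : Module.Finite R (LinearMap.ker p) := Module.Finite.iff_fg.mpr hker
    have hI : (LinearMap.range q).FG := by
      rw [LinearMap.range_eq_map]
      exact (Module.Finite.fg_top (R := R) (M := LinearMap.ker p)).map q
    haveI : Module.FinitePresentation R (LinearMap.range q) := hR _ hI
    haveI : Module.FinitePresentation R (LinearMap.ker p) :=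
      fp_of_linearEquiv (M := LinearMap.range q) (N := LinearMap.ker p) (LinearEquiv.ofInjective q hq).symm
    exact Module.finitePresentation_of_ker p hp

/-- Over a left coherent ring, finitely generated submodules of finitely presented
modules are finitely presented. -/
lemma coherent_fg_submodule_fp (hR : IsLeftCoherentRing R) {M : Type u} [AddCommGroup M]
    [Module R M] [h : Module.FinitePresentation R M] (S : Submodule R M) (hS : S.FG) :
    Module.FinitePresentation R S := by
  classical
  obtain ⟨s, hs, hs'⟩ := h
  set l := Finsupp.linearCombination R ((↑) : s → M) with hl
  have hlsurj : Function.Surjective l := by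
    apply LinearMap.range_eq_top.mp
    rw [Finsupp.range_linearCombination, Subtype.range_val, ← hs]
  set S' : Submodule R (s →₀ R) := S.comap l with hS'def
  have hmap : S'.map l = S := Submodule.map_comap_eq_of_surjective hlsurj S
  have hle : LinearMap.ker l ≤ S' := fun x hx => by
    simp only [hS'def, Submodule.mem_comap, LinearMap.mem_ker.mp hx]
    exact S.zero_mem
  have hS' : S'.FG := by
    apply Submodule.fg_of_fg_map_of_fg_inf_ker l
    · rw [hmap]; exact hS
    · rw [inf_eq_right.mpr hle]; exact hs'
  -- S' is f.p. : transport to `Fin n → R`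
  have hS'fp : Module.FinitePresentation R S' := by
    let e : (s →₀ R) ≃ₗ[R] (Fin s.card → R) :=
      (Finsupp.linearEquivFunOnFinite R R s).trans
        (LinearEquiv.piCongrLeft' R (fun _ => R) (s.equivFin))
    haveI := coherent_fg_submodule_free_fp hR s.card (S'.map (e : (s →₀ R) →ₗ[R] _))
      (hS'.map _)
    exact fp_of_linearEquiv (M := S'.map (e : (s →₀ R) →ₗ[R] (Fin s.card → R))) (N := S') (e.submoduleMap S').symm
  haveI := hS'fp
  -- the restriction of l to S' surjects onto S with f.g. kernel
  let p : S' →ₗ[R] S := l.restrict (fun x hx => hx)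
  have hpsurj : Function.Surjective p := by
    rintro ⟨y, hy⟩
    obtain ⟨x, hx⟩ := hlsurj y
    exact ⟨⟨x, show l x ∈ S from hx ▸ hy⟩, Subtype.ext hx⟩
  have hkerp : (LinearMap.ker p).FG := by
    have h1 : (LinearMap.ker p).map S'.subtype = LinearMap.ker l := by
      have : LinearMap.ker p = (LinearMap.ker l).comap S'.subtype := by
        ext x
        simp only [LinearMap.mem_ker, Submodule.mem_comap]
        constructor
        · intro hx
          have := congrArg Subtype.val hx
          exact this
        · intro hx
          exact Subtype.ext hx
      rw [this, Submodule.map_comap_subtype, inf_eq_right.mpr hle]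
    apply Submodule.fg_of_fg_map_injective S'.subtype (Submodule.injective_subtype S')
    rw [h1]; exact hs'
  exact Module.finitePresentation_of_surjective (M := S') p hpsurj hkerp

end Algebra

section Algebra2
variable {R : Type u} [Ring R]

lemma fp_ker' (hR : IsLeftCoherentRing R) {M N : Type u} [AddCommGroup M] [Module R M]
    [AddCommGroup N] [Module R N] [Module.FinitePresentation R M]
    [Module.FinitePresentation R N] (f : M →ₗ[R] N) :
    Module.FinitePresentation R (LinearMap.ker f) := by
  have hrange : (LinearMap.range f).FG := by
    rw [LinearMap.range_eq_map]
    exact (Module.Finite.fg_top (R := R) (M := M)).map f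
  haveI : Module.FinitePresentation R (LinearMap.range f) :=
    coherent_fg_submodule_fp hR _ hrange
  have hker : (LinearMap.ker f.rangeRestrict).FG :=
    Module.FinitePresentation.fg_ker f.rangeRestrict f.surjective_rangeRestrict
  rw [LinearMap.ker_rangeRestrict] at hker
  exact coherent_fg_submodule_fp hR _ hker

lemma fp_quot_range {M N : Type u} [AddCommGroup M] [Module R M]
    [AddCommGroup N] [Module R N] [Module.Finite R M]
    [Module.FinitePresentation R N] (f : M →ₗ[R] N) :
    Module.FinitePresentation R (N ⧸ LinearMap.range f) :=
  Module.finitePresentation_of_surjective (LinearMap.range f).mkQ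
    (Submodule.mkQ_surjective _)
    (by rw [Submodule.ker_mkQ, LinearMap.range_eq_map]
        exact (Module.Finite.fg_top (R := R) (M := M)).map f)

end Algebra2

section Wide
variable {R : Type u} [Ring R]

lemma isWide_finPres (hR : IsLeftCoherentRing R) :
    IsWideSubcategory (finPresModules R) where
  mem_of_iso {X Y} e hX := by
    haveI : Module.FinitePresentation R X := hX
    exact fp_of_linearEquiv (M := X) e.toLinearEquiv
  kernel_mem {X Y} f hX hY := by
    haveI : Module.FinitePresentation R X := hX
    haveI : Module.FinitePresentation R Y := hY
    haveI : Module.FinitePresentation R (LinearMap.ker f.hom) := fp_ker' hR f.hom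
    exact fp_of_linearEquiv (M := LinearMap.ker f.hom)
      (ModuleCat.kernelIsoKer f).toLinearEquiv.symm
  cokernel_mem {X Y} f hX hY := by
    haveI : Module.FinitePresentation R X := hX
    haveI : Module.FinitePresentation R Y := hY
    haveI : Module.FinitePresentation R (Y ⧸ LinearMap.range f.hom) := fp_quot_range f.hom
    exact fp_of_linearEquiv (M := (Y ⧸ LinearMap.range f.hom))
      (ModuleCat.cokernelIsoRangeQuotient f).toLinearEquiv.symm
  extension_mem S hS hX₁ hX₃ := by
    haveI : Module.FinitePresentation R S.X₁ := hX₁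
    haveI : Module.FinitePresentation R S.X₃ := hX₃
    have hinj : Function.Injective S.f :=
      (ModuleCat.mono_iff_injective S.f).mp hS.mono_f
    have hsurj : Function.Surjective S.g :=
      (ModuleCat.epi_iff_surjective S.g).mp hS.epi_g
    have hex : LinearMap.range S.f.hom = LinearMap.ker S.g.hom :=
      hS.exact.moduleCat_range_eq_ker
    haveI : Module.FinitePresentation R (LinearMap.ker S.g.hom) := by
      rw [← hex]
      exact fp_of_linearEquiv (M := S.X₁) (LinearEquiv.ofInjective S.f.hom hinj)
    exact Module.finitePresentation_of_ker S.g.hom hsurj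

end Wide

section Single
variable {R : Type u} [Ring R] [HasDerivedCategory.{w} (ModuleCat.{u} R)]

/-- The homology of the single complex in the derived category agrees with the homology of
the single homological complex. -/
noncomputable def singleHomologyIso (M : ModuleCat.{u} R) (n : ℤ) :
    (DerivedCategory.homologyFunctor (ModuleCat.{u} R) n).obj
      ((DerivedCategory.singleFunctor (ModuleCat.{u} R) 0).obj M) ≅
    ((HomologicalComplex.single (ModuleCat.{u} R) (ComplexShape.up ℤ) 0).obj M).homology n :=
  (DerivedCategory.homologyFunctor _ n).mapIso
      (((SingleFunctors.evaluation _ _ 0).mapIso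
        (DerivedCategory.singleFunctorsPostcompQIso _)).app M) ≪≫
    (DerivedCategory.homologyFunctorFactors _ n).app _

lemma fp_single_homology (M : ModuleCat.{u} R) [Module.FinitePresentation R M] (n : ℤ) :
    (DerivedCategory.homologyFunctor (ModuleCat.{u} R) n).obj
      ((DerivedCategory.singleFunctor (ModuleCat.{u} R) 0).obj M) ∈ finPresModules R := by
  by_cases hn : n = 0
  · subst hn
    have e := singleHomologyIso M 0 ≪≫
      HomologicalComplex.singleObjHomologySelfIso (ComplexShape.up ℤ) 0 M
    exact fp_of_linearEquiv (M := M) e.symm.toLinearEquiv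
  · have hz := HomologicalComplex.isZero_single_obj_homology (ComplexShape.up ℤ) 0 M n hn
    have e := singleHomologyIso M n ≪≫
      hz.iso (ModuleCat.isZero_of_subsingleton (ModuleCat.of R PUnit))
    haveI : Subsingleton ((DerivedCategory.homologyFunctor (ModuleCat.{u} R) n).obj
        ((DerivedCategory.singleFunctor (ModuleCat.{u} R) 0).obj M)) :=
      e.toLinearEquiv.toEquiv.subsingleton
    exact fp_of_subsingleton _

end Single

section Main
variable {R : Type u} [Ring R]

/-- A linear equivalence between subsingleton modules. -/
def zeroLinearEquiv (A B : Type*) [AddCommGroup A] [Module R A] [AddCommGroup B] [Module R B]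
    [Subsingleton A] [Subsingleton B] : A ≃ₗ[R] B where
  toFun _ := 0
  map_add' _ _ := Subsingleton.elim _ _
  map_smul' _ _ := Subsingleton.elim _ _
  invFun _ := 0
  left_inv _ := Subsingleton.elim _ _
  right_inv _ := Subsingleton.elim _ _

lemma pi_fin_mem {C : Set (ModuleCat.{u} R)} (hC : IsWideSubcategory C)
    (hRC : ModuleCat.of R R ∈ C) : ∀ n : ℕ, ModuleCat.of R (Fin n → R) ∈ C := by
  intro n
  induction n with
  | zero =>
    have h0 := hC.kernel_mem (𝟙 (ModuleCat.of R R)) hRC hRC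
    refine hC.mem_of_iso (ModuleCat.kernelIsoKer _ ≪≫ ?_) h0
    haveI : Subsingleton (LinearMap.ker (ModuleCat.Hom.hom (𝟙 (ModuleCat.of R R)))) :=
      ⟨fun a b => Subtype.ext ((LinearMap.mem_ker.mp a.2).trans
        (LinearMap.mem_ker.mp b.2).symm)⟩
    exact (zeroLinearEquiv (LinearMap.ker (ModuleCat.Hom.hom (𝟙 (ModuleCat.of R R)))) (Fin 0 → R)).toModuleIso
  | succ n IH =>
    classical
    let f0 : R →ₗ[R] (Fin (n + 1) → R) := LinearMap.single R (fun _ => R) 0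
    let g0 : (Fin (n + 1) → R) →ₗ[R] (Fin n → R) := LinearMap.funLeft R R Fin.succ
    have hf0 : Function.Injective f0 := fun a b h => by
      have := congrFun h 0
      simpa [f0] using this
    have hg0 : Function.Surjective g0 := fun v =>
      ⟨(Fin.cons 0 v : Fin (n + 1) → R), funext fun i => by
        show (Fin.cons 0 v : Fin (n + 1) → R) i.succ = v i
        exact Fin.cons_succ (α := fun _ : Fin (n + 1) => R) 0 v i⟩
    have hex0 : ∀ x : Fin (n + 1) → R, g0 x = 0 → ∃ y : R, f0 y = x := by
      intro x hx
      refine ⟨x 0, funext fun i => ?_⟩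
      refine Fin.cases ?_ ?_ i
      · exact Pi.single_eq_same (M := fun _ : Fin (n + 1) => R) 0 (x 0)
      · intro j
        have hxj : x j.succ = 0 := congrFun hx j
        rw [hxj]
        exact Pi.single_eq_of_ne (M := fun _ : Fin (n + 1) => R) (Fin.succ_ne_zero j) (x 0)
    let f : ModuleCat.of R R ⟶ ModuleCat.of R (Fin (n + 1) → R) := ModuleCat.ofHom f0
    let g : ModuleCat.of R (Fin (n + 1) → R) ⟶ ModuleCat.of R (Fin n → R) := ModuleCat.ofHom g0
    have hfg : f ≫ g = 0 := by
      apply ModuleCat.hom_ext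
      apply LinearMap.ext
      intro r
      funext i
      show g0 (f0 r) i = 0
      rw [show g0 (f0 r) i = f0 r i.succ from rfl]
      exact Pi.single_eq_of_ne (Fin.succ_ne_zero i) r
    let S := CategoryTheory.ShortComplex.mk f g hfg
    have hSE : S.ShortExact := by
      haveI : Mono S.f := (ModuleCat.mono_iff_injective f).mpr hf0
      haveI : Epi S.g := (ModuleCat.epi_iff_surjective g).mpr hg0
      refine ⟨S.moduleCat_exact_iff.mpr ?_⟩
      intro x hx
      exact hex0 x hx
    exact hC.extension_mem S hSE hRC IH

lemma finsupp_mem {C : Set (ModuleCat.{u} R)} (hC : IsWideSubcategory C)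
    (hRC : ModuleCat.of R R ∈ C) (ι : Type u) [Fintype ι] :
    ModuleCat.of R (ι →₀ R) ∈ C := by
  let e : (ι →₀ R) ≃ₗ[R] (Fin (Fintype.card ι) → R) :=
    (Finsupp.linearEquivFunOnFinite R R ι).trans
      (LinearEquiv.piCongrLeft' R (fun _ => R) (Fintype.equivFin ι))
  exact hC.mem_of_iso e.symm.toModuleIso (pi_fin_mem hC hRC _)

end Main


/-- Corollary 3.2: if `R` is a left coherent ring and `C₀` is the wide
subcategory of finitely presented modules, then `g(f(C₀)) = C₀`: every finitely presented
module lies in the wide subcategory generated by the homology of small objects of `D(R)`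
all of whose homology modules are finitely presented. -/
theorem gf_of_finPres (R : Type u) [Ring R]
    [HasDerivedCategory.{w} (ModuleCat.{u} R)]
    (hR : IsLeftCoherentRing R) :
    gSet (fSet (finPresModules R)) = finPresModules R := by
  apply Set.Subset.antisymm
  · intro M hM
    refine hM (finPresModules R) ⟨isWide_finPres hR, ?_⟩
    rintro N ⟨X, hX, n, ⟨e⟩⟩
    haveI : Module.FinitePresentation R
        ((DerivedCategory.homologyFunctor (ModuleCat.{u} R) n).obj X) := hX.2 n
    exact fp_of_linearEquiv
      (M := ((DerivedCategory.homologyFunctor (ModuleCat.{u} R) n).obj X))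
      e.toLinearEquiv
  · intro M hM
    haveI hMfp : Module.FinitePresentation R M := hM
    refine Set.mem_sInter.mpr ?_
    rintro C ⟨hCw, hCs⟩
    haveI : Module.FinitePresentation R (ModuleCat.of R R) :=
      (inferInstance : Module.FinitePresentation R R)
    have hRC : ModuleCat.of R R ∈ C := by
      apply hCs
      refine ⟨(DerivedCategory.singleFunctor (ModuleCat.{u} R) 0).obj (ModuleCat.of R R),
        ⟨fun D _ hmem => hmem, fun n => fp_single_homology (ModuleCat.of R R) n⟩, 0,
        ⟨singleHomologyIso (ModuleCat.of R R) 0 ≪≫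
          HomologicalComplex.singleObjHomologySelfIso (ComplexShape.up ℤ) 0 _⟩⟩
    classical
    obtain ⟨s, hs, hk⟩ := hMfp
    set l := Finsupp.linearCombination R ((↑) : s → M) with hl
    have hlsurj : Function.Surjective l := by
      apply LinearMap.range_eq_top.mp
      rw [hl, Finsupp.range_linearCombination, Subtype.range_val, ← hs]
    obtain ⟨t, ht⟩ := hk
    let l₂ : (t →₀ R) →ₗ[R] (s →₀ R) := Finsupp.linearCombination R ((↑) : t → (s →₀ R))
    have hrange : LinearMap.range l₂ = LinearMap.ker l := by
      rw [Finsupp.range_linearCombination, Subtype.range_val]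
      exact ht
    let φ : ModuleCat.of R (t →₀ R) ⟶ ModuleCat.of R (s →₀ R) := ModuleCat.ofHom l₂
    have hcoker : cokernel φ ∈ C :=
      hCw.cokernel_mem φ (finsupp_mem hCw hRC _) (finsupp_mem hCw hRC _)
    refine hCw.mem_of_iso (ModuleCat.cokernelIsoRangeQuotient φ ≪≫ ?_) hcoker
    exact ((Submodule.quotEquivOfEq _ _ hrange).trans
      (l.quotKerEquivOfSurjective hlsurj)).toModuleIso
end

section
/- Let R be a regular left coherent ring (every finitely presented R-module has finite projective dimension) and let C be a wide subcategory of the category of finitely presented R-modules. Then gf(C) = C: C equals the wide subcategory generated by the homology modules of those small objects X of D(R) all of whose homology modules lie in C. -/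
open CategoryTheory CategoryTheory.Limits CategoryTheory.Pretriangulated ZeroObject

universe w u

/-- An `R`-module `M` has finite projective dimension if there is an `i` such that
`Ext^j(M, N) = 0` for all modules `N` and all `j > i`. -/
def HasFiniteProjectiveDimension (R : Type u) [Ring R] (M : ModuleCat.{u} R) : Prop :=
  ∃ i : ℕ, ∀ (N : ModuleCat.{u} R) (j : ℕ), i < j →
    Subsingleton (((_root_.Ext ℤ (ModuleCat.{u} R) j).obj (Opposite.op M)).obj N)


noncomputable section GFAux

namespace GFAux

variable {R : Type u} [Ring R]

abbrev extGrp (M N : ModuleCat.{u} R) (j : ℕ) : ModuleCat ℤ :=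
  ((_root_.Ext ℤ (ModuleCat.{u} R) j).obj (Opposite.op M)).obj N

lemma subsingleton_iff_isZero {S : Type*} [Ring S] (M : ModuleCat S) :
    Subsingleton M ↔ IsZero M := by
  constructor
  · intro h; exact ModuleCat.isZero_of_subsingleton M
  · intro h
    refine ⟨fun a b => ?_⟩
    have h1 : (𝟙 M : M ⟶ M) = 0 := by
      apply h.eq_of_src
    calc a = (𝟙 M : M ⟶ M) a := rfl
    _ = (0 : M ⟶ M) a := by rw [h1]
    _ = (𝟙 M : M ⟶ M) b := by rw [h1]; rfl
    _ = b := rfl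

section Resolution

variable (S : ShortComplex (ModuleCat.{u} R)) (P : ProjectiveResolution S.X₁)

/-- components of the resolution of `S.X₃` built from a resolution of `S.X₁`. -/
def QX : ℕ → ModuleCat.{u} R
  | 0 => S.X₂
  | (n+1) => P.complex.X n

/-- differentials of the resolution of `S.X₃`. -/
def Qd : ∀ n, QX S P (n+1) ⟶ QX S P n
  | 0 => P.π.f 0 ≫ S.f
  | (n+1) => P.complex.d (n+1) n

/-- the resolution complex of `S.X₃`. -/
def Qc : ChainComplex (ModuleCat.{u} R) ℕ :=
  ChainComplex.of (QX S P) (Qd S P) (by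
    rintro (_|n)
    · show P.complex.d 1 0 ≫ (P.π.f 0 ≫ S.f) = 0
      erw [← Category.assoc, P.complex_d_comp_π_f_zero, zero_comp]
    · show P.complex.d (n+2) (n+1) ≫ P.complex.d (n+1) n = 0
      simp)

lemma Qc_d_one_zero : (Qc S P).d 1 0 = P.π.f 0 ≫ S.f :=
  ChainComplex.of_d (QX S P) (Qd S P) 0

lemma Qc_d_succ (n : ℕ) : (Qc S P).d (n+2) (n+1) = P.complex.d (n+1) n :=
  ChainComplex.of_d (QX S P) (Qd S P) (n+1)

/-- the augmentation map. -/
def πQ : Qc S P ⟶ (ChainComplex.single₀ (ModuleCat.{u} R)).obj S.X₃ :=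
  (ChainComplex.toSingle₀Equiv _ _).symm ⟨S.g, by
    erw [Qc_d_one_zero, Category.assoc, S.zero, comp_zero]⟩

lemma exact_one (hS : S.ShortExact) :
    (ShortComplex.mk (P.complex.d 1 0) (P.π.f 0 ≫ S.f)
      (by erw [← Category.assoc, P.complex_d_comp_π_f_zero, zero_comp])).Exact := by
  rw [ShortComplex.moduleCat_exact_iff]
  intro x hx
  have hx' : P.π.f 0 x = 0 := by
    have hinj : Function.Injective S.f := by
      rw [← ModuleCat.mono_iff_injective]; exact hS.mono_f
    apply hinj
    exact hx.trans (map_zero _).symm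
  exact (ShortComplex.moduleCat_exact_iff _).1 P.exact₀ x hx'

lemma exact_zero (hS : S.ShortExact) :
    (ShortComplex.mk (P.π.f 0 ≫ S.f) S.g
      (by erw [Category.assoc, S.zero, comp_zero])).Exact := by
  rw [ShortComplex.moduleCat_exact_iff]
  intro x hx
  obtain ⟨y, hy⟩ := (ShortComplex.moduleCat_exact_iff _).1 hS.exact x hx
  have hsurj : Function.Surjective (P.π.f 0) := by
    rw [← ModuleCat.epi_iff_surjective]; infer_instance
  obtain ⟨z, hz⟩ := hsurj y
  refine ⟨z, ?_⟩
  show S.f (P.π.f 0 z) = x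
  rw [hz]; exact hy

lemma Qc_exactAt_succ (hS : S.ShortExact) (n : ℕ) : (Qc S P).ExactAt (n + 1) := by
  rw [HomologicalComplex.exactAt_iff' _ (n + 1 + 1) (n + 1) n (by simp) (by simp)]
  dsimp [HomologicalComplex.sc', HomologicalComplex.shortComplexFunctor']
  simp only [Qc, ChainComplex.of_d]
  match n with
  | 0 => exact exact_one S P hS
  | n + 1 => exact P.exact_succ n

lemma Qc_quasiIsoAt_zero (hS : S.ShortExact) : QuasiIsoAt (πQ S P) 0 := by
  rw [ChainComplex.quasiIsoAt₀_iff, ShortComplex.quasiIso_iff_of_zeros']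
  rotate_left
  · rfl
  · rfl
  · rfl
  refine (ShortComplex.exact_and_epi_g_iff_of_iso
    (ShortComplex.isoMk (Iso.refl _) (Iso.refl _) (Iso.refl _) ?_ ?_ :
      _ ≅ ShortComplex.mk (P.π.f 0 ≫ S.f) S.g
        (by erw [Category.assoc, S.zero, comp_zero]))).2
    ⟨exact_zero S P hS, hS.epi_g⟩
  · simp [Qc_d_one_zero]
  · simp [πQ]

/-- the projective resolution of `S.X₃`. -/
def QRes (hS : S.ShortExact) [Projective S.X₂] : ProjectiveResolution S.X₃ where
  complex := Qc S P
  projective := by rintro (_|n) <;> dsimp [Qc, QX] <;> infer_instance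
  π := πQ S P
  quasiIso := ⟨fun n => by
    cases n with
    | zero => exact Qc_quasiIsoAt_zero S P hS
    | succ n =>
        rw [quasiIsoAt_iff_exactAt']
        · exact Qc_exactAt_succ S P hS n
        · apply ChainComplex.exactAt_succ_single_obj⟩

end Resolution

section ExtLemmas

lemma subsingleton_ext_iff (M N : ModuleCat.{u} R) (j : ℕ) (P : ProjectiveResolution M) :
    Subsingleton (extGrp M N j) ↔ (P.complex.linearYonedaObj ℤ N).ExactAt j := by
  rw [subsingleton_iff_isZero, (P.isoExt j N).isZero_iff,
    ← HomologicalComplex.exactAt_iff_isZero_homology]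

variable (S : ShortComplex (ModuleCat.{u} R))

lemma ext_shift (hS : S.ShortExact) [Projective S.X₂] (P : ProjectiveResolution S.X₁)
    (N : ModuleCat.{u} R) (j : ℕ)
    (h : Subsingleton (extGrp S.X₃ N (j+2))) : Subsingleton (extGrp S.X₁ N (j+1)) := by
  rw [subsingleton_ext_iff _ _ _ (QRes S P hS)] at h
  rw [subsingleton_ext_iff _ _ _ P]
  rw [HomologicalComplex.exactAt_iff' _ (j+1) (j+2) (j+3) (by simp) (by simp)] at h
  rw [HomologicalComplex.exactAt_iff' _ j (j+1) (j+2) (by simp) (by simp)]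
  refine (ShortComplex.exact_iff_of_iso ?_).2 h
  refine ShortComplex.isoMk (Iso.refl _) (Iso.refl _) (Iso.refl _) ?_ ?_
  · ext f
    show ((Qc S P).linearYonedaObj ℤ N).d (j+1) (j+2) f =
      (P.complex.linearYonedaObj ℤ N).d j (j+1) f
    simp [ChainComplex.linearYonedaObj_d, Qc_d_succ]
    rfl
  · ext f
    show ((Qc S P).linearYonedaObj ℤ N).d (j+2) (j+3) f =
      (P.complex.linearYonedaObj ℤ N).d (j+1) (j+2) f
    simp [ChainComplex.linearYonedaObj_d, Qc_d_succ]
    rfl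

lemma ext_split (hS : S.ShortExact) [Projective S.X₂] (P : ProjectiveResolution S.X₁)
    (h : Subsingleton (extGrp S.X₃ S.X₁ 1)) :
    ∃ t : S.X₃ ⟶ S.X₂, t ≫ S.g = 𝟙 S.X₃ := by
  rw [subsingleton_ext_iff _ _ _ (QRes S P hS)] at h
  rw [HomologicalComplex.exactAt_iff' _ 0 1 2 (by simp) (by simp)] at h
  rw [ShortComplex.moduleCat_exact_iff] at h
  have hd : (((QRes S P hS).complex.linearYonedaObj ℤ S.X₁).d 1 2) (P.π.f 0) = 0 := by
    show (Qc S P).d 2 1 ≫ P.π.f 0 = 0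
    rw [Qc_d_succ]
    exact P.complex_d_comp_π_f_zero
  obtain ⟨s₀, hs⟩ := h (P.π.f 0) hd
  let s : S.X₂ ⟶ S.X₁ := s₀
  have hs' : (P.π.f 0 ≫ S.f) ≫ s = P.π.f 0 := by
    rw [← Qc_d_one_zero]; exact hs
  have hfs : S.f ≫ s = 𝟙 S.X₁ := by
    haveI : Epi (P.π.f 0) := inferInstance
    erw [← cancel_epi (P.π.f 0), ← Category.assoc, hs']
    exact (Category.comp_id _).symm
  haveI := hS.epi_g
  have hw : S.f ≫ (𝟙 S.X₂ - s ≫ S.f) = 0 := by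
    rw [Preadditive.comp_sub, Category.comp_id, ← Category.assoc, hfs, Category.id_comp,
      sub_self]
  refine ⟨hS.exact.desc (𝟙 S.X₂ - s ≫ S.f) hw, ?_⟩
  rw [← cancel_epi S.g, ← Category.assoc, hS.exact.g_desc, Category.comp_id,
    Preadditive.sub_comp, Category.id_comp, Category.assoc, S.zero, comp_zero, sub_zero]

end ExtLemmas

section Coherent

set_option maxHeartbeats 1000000 in
set_option synthInstance.maxHeartbeats 200000 in
/-- A finitely generated submodule of a finite free module over a left coherent ring
is finitely presented. -/
lemma fp_of_fg_submodule (hcoh : ∀ I : Ideal R, I.FG → Module.FinitePresentation R I) :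
    ∀ (n : ℕ) (K : Submodule R (Fin n → R)), K.FG → Module.FinitePresentation R K := by
  intro n
  induction n with
  | zero =>
      intro K hK
      haveI : Subsingleton (Fin 0 → R) := by infer_instance
      haveI : Subsingleton K := ⟨fun a b => Subtype.ext (Subsingleton.elim _ _)⟩
      refine Module.finitePresentation_of_surjective (0 : R →ₗ[R] K)
        (fun y => ⟨0, Subsingleton.elim _ _⟩) ?_
      have : LinearMap.ker (0 : R →ₗ[R] K) = ⊤ := LinearMap.ker_zero
      rw [this]
      exact Module.Finite.fg_top
  | succ n IH =>
      intro K hK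
      haveI : Module.Finite R K := ⟨(Submodule.fg_top K).mpr hK⟩
      set φ : K →ₗ[R] R := (LinearMap.proj 0) ∘ₗ K.subtype with hφ
      have hIfg : (LinearMap.range φ).FG := by
        rw [← Submodule.map_top]
        exact Submodule.FG.map _ ((Submodule.fg_top K).mpr hK)
      haveI hIfp : Module.FinitePresentation R (LinearMap.range φ) := hcoh _ hIfg
      have hsurj : Function.Surjective (LinearMap.rangeRestrict φ) :=
        LinearMap.surjective_rangeRestrict φ
      have hker_fg : (LinearMap.ker (LinearMap.rangeRestrict φ)).FG :=
        Module.FinitePresentation.fg_ker _ hsurj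
      -- the kernel embeds into `Fin n → R`
      set ψ : (LinearMap.ker (LinearMap.rangeRestrict φ)) →ₗ[R] (Fin n → R) :=
        (LinearMap.funLeft R R Fin.succ) ∘ₗ K.subtype ∘ₗ
          (LinearMap.ker (LinearMap.rangeRestrict φ)).subtype with hψ
      have hinj : Function.Injective ψ := by
        intro x y hxy
        have h0 : ∀ z : LinearMap.ker (LinearMap.rangeRestrict φ),
            ((z : K) : Fin (n+1) → R) 0 = 0 := by
          intro z
          have hz := z.2
          rw [LinearMap.mem_ker] at hz
          have := congrArg (Subtype.val) hz
          exact this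
        refine Subtype.ext (Subtype.ext (funext fun i => ?_))
        refine Fin.cases ?_ ?_ i
        · rw [h0 x, h0 y]
        · intro i
          exact congrFun hxy i
      have hrfg : (LinearMap.range ψ).FG := by
        rw [← Submodule.map_top]
        exact Submodule.FG.map _ ((Submodule.fg_top _).mpr hker_fg)
      haveI hrfp : Module.FinitePresentation R (LinearMap.range ψ) := IH _ hrfg
      haveI hkerfp : Module.FinitePresentation R (LinearMap.ker (LinearMap.rangeRestrict φ)) := by
        have e := LinearEquiv.ofInjective ψ hinj
        refine Module.finitePresentation_of_surjective (M := LinearMap.range ψ)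
          (N := LinearMap.ker (LinearMap.rangeRestrict φ)) e.symm.toLinearMap e.symm.surjective ?_
        have : LinearMap.ker (e.symm.toLinearMap) = ⊥ :=
          LinearMap.ker_eq_bot_of_injective e.symm.injective
        rw [this]
        exact Submodule.fg_bot
      exact Module.finitePresentation_of_ker (LinearMap.rangeRestrict φ) hsurj

end Coherent

end GFAux

end GFAux


namespace GFAux

section Derived

variable {R : Type u} [Ring R] [HasDerivedCategory.{w} (ModuleCat.{u} R)]

/-- homology of the single complex. -/
noncomputable def homology_single_iso (M : ModuleCat.{u} R) (n : ℤ) :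
    (DerivedCategory.homologyFunctor (ModuleCat.{u} R) n).obj
      ((DerivedCategory.singleFunctor (ModuleCat.{u} R) 0).obj M) ≅
    ((HomologicalComplex.single (ModuleCat.{u} R) (ComplexShape.up ℤ) 0).obj M).homology n :=
  (DerivedCategory.homologyFunctor _ n).mapIso
      (((SingleFunctors.evaluation _ _ 0).mapIso
        (DerivedCategory.singleFunctorsPostcompQIso _)).app M) ≪≫
    (DerivedCategory.homologyFunctorFactors _ n).app _

/-- `H_0` of the single complex. -/
noncomputable def homology_single_zero_iso (M : ModuleCat.{u} R) :
    (DerivedCategory.homologyFunctor (ModuleCat.{u} R) 0).obj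
      ((DerivedCategory.singleFunctor (ModuleCat.{u} R) 0).obj M) ≅ M :=
  homology_single_iso M 0 ≪≫ HomologicalComplex.singleObjHomologySelfIso _ _ _

lemma isZero_homology_single (M : ModuleCat.{u} R) (n : ℤ) (hn : n ≠ 0) :
    IsZero ((DerivedCategory.homologyFunctor (ModuleCat.{u} R) n).obj
      ((DerivedCategory.singleFunctor (ModuleCat.{u} R) 0).obj M)) := by
  rw [(homology_single_iso M n).isZero_iff,
    ← HomologicalComplex.exactAt_iff_isZero_homology]
  exact HomologicalComplex.exactAt_single_obj _ _ _ _ hn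

lemma single_free_mem (D : Set (DerivedCategory (ModuleCat.{u} R)))
    (hD : IsThickSubcategory D)
    (hRD : (DerivedCategory.singleFunctor (ModuleCat.{u} R) 0).obj (ModuleCat.of R R) ∈ D)
    (k : ℕ) :
    (DerivedCategory.singleFunctor (ModuleCat.{u} R) 0).obj (ModuleCat.of R (Fin k → R)) ∈ D := by
  induction k with
  | zero =>
      haveI : Subsingleton (Fin 0 → R) := inferInstance
      have hz : IsZero (ModuleCat.of R (Fin 0 → R)) := ModuleCat.isZero_of_subsingleton _
      have hz' : IsZero ((DerivedCategory.singleFunctor (ModuleCat.{u} R) 0).obj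
          (ModuleCat.of R (Fin 0 → R))) := (DerivedCategory.singleFunctor _ 0).map_isZero hz
      exact hD.mem_of_iso hz'.isoZero.symm hD.zero_mem
  | succ k IH =>
      classical
      let f₁ : R →ₗ[R] (Fin (k+1) → R) := LinearMap.single R (fun _ => R) 0
      let g₁ : (Fin (k+1) → R) →ₗ[R] (Fin k → R) := LinearMap.funLeft R R Fin.succ
      have hzero : ModuleCat.ofHom f₁ ≫ ModuleCat.ofHom g₁ = 0 := by
        apply ModuleCat.hom_ext
        apply LinearMap.ext
        intro x
        show g₁ (f₁ x) = 0
        funext j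
        show (Pi.single (M := fun _ : Fin (k+1) => R) 0 x) j.succ = (0 : Fin k → R) j
        rw [Pi.single_eq_of_ne (M := fun _ : Fin (k+1) => R) (Fin.succ_ne_zero j) x]
        rfl
      let S : ShortComplex (ModuleCat.{u} R) := ShortComplex.mk
        (ModuleCat.ofHom f₁) (ModuleCat.ofHom g₁) hzero
      have hmono : Mono S.f := by
        rw [ModuleCat.mono_iff_injective]
        intro x y hxy
        have := congrFun hxy 0
        simpa [f₁, S, Pi.single_eq_same] using this
      have hepi : Epi S.g := by
        rw [ModuleCat.epi_iff_surjective]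
        intro v
        refine ⟨(Fin.cons (0 : R) (v : Fin k → R) : Fin (k+1) → R), ?_⟩
        show g₁ _ = v
        funext j
        show (Fin.cons (0 : R) (v : Fin k → R) : Fin (k+1) → R) j.succ = (v : Fin k → R) j
        rw [Fin.cons_succ]
      have hS : S.ShortExact := by
        refine { exact := ?_, mono_f := hmono, epi_g := hepi }
        rw [ShortComplex.moduleCat_exact_iff]
        intro w hw
        refine ⟨(w : Fin (k+1) → R) 0, ?_⟩
        show f₁ _ = w
        funext j
        refine Fin.cases ?_ ?_ j
        · show (Pi.single (M := fun _ : Fin (k+1) => R) 0 ((w : Fin (k+1) → R) 0)) 0 =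
            (w : Fin (k+1) → R) 0
          rw [Pi.single_eq_same (M := fun _ : Fin (k+1) => R)]
        · intro i
          show (Pi.single (M := fun _ : Fin (k+1) => R) 0 ((w : Fin (k+1) → R) 0)) i.succ =
            (w : Fin (k+1) → R) i.succ
          have hw' : (w : Fin (k+1) → R) i.succ = 0 := congrFun hw i
          rw [hw', Pi.single_eq_of_ne (M := fun _ : Fin (k+1) => R) (Fin.succ_ne_zero i)]
      have hT := hS.singleTriangle_distinguished
      refine hD.ext₂ hS.singleTriangle hT hRD IH

end Derived

section Main

variable {R : Type u} [Ring R] [HasDerivedCategory.{w} (ModuleCat.{u} R)]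

lemma single_mem_of_fp
    (hcoh : IsLeftCoherentRing R)
    (D : Set (DerivedCategory (ModuleCat.{u} R))) (hD : IsThickSubcategory D)
    (hRD : (DerivedCategory.singleFunctor (ModuleCat.{u} R) 0).obj (ModuleCat.of R R) ∈ D) :
    ∀ (i : ℕ) (M : ModuleCat.{u} R), Module.FinitePresentation R M →
      (∀ (N : ModuleCat.{u} R) (j : ℕ), i < j → Subsingleton (extGrp M N j)) →
      (DerivedCategory.singleFunctor (ModuleCat.{u} R) 0).obj M ∈ D := by
  intro i
  induction i with
  | zero =>
      intro M hM hvan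
      haveI := hM
      obtain ⟨k, p, hp⟩ := Module.Finite.exists_fin' R M
      let S : ShortComplex (ModuleCat.{u} R) := ShortComplex.mk
        (ModuleCat.ofHom (LinearMap.ker p).subtype)
        (ModuleCat.ofHom p : ModuleCat.of R (Fin k → R) ⟶ M)
        (by apply ModuleCat.hom_ext; apply LinearMap.ext; intro x; exact x.2)
      have hmono : Mono S.f := by
        rw [ModuleCat.mono_iff_injective]
        exact Subtype.val_injective
      have hepi : Epi S.g := by
        rw [ModuleCat.epi_iff_surjective]
        exact hp
      have hS : S.ShortExact := by
        refine { exact := ?_, mono_f := hmono, epi_g := hepi }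
        rw [ShortComplex.moduleCat_exact_iff]
        intro x hx
        exact ⟨⟨x, hx⟩, rfl⟩
      haveI : Projective S.X₂ :=
        ModuleCat.projective_of_free (M := ModuleCat.of R (Fin k → R)) (Pi.basisFun R (Fin k))
      obtain ⟨t, ht⟩ := ext_split S hS (ProjectiveResolution.of S.X₁)
        (hvan S.X₁ 1 Nat.one_pos)
      refine hD.retract_mem _ _ ((DerivedCategory.singleFunctor (ModuleCat.{u} R) 0).map t)
        ((DerivedCategory.singleFunctor (ModuleCat.{u} R) 0).map S.g) ?_
        (single_free_mem D hD hRD k)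
      rw [← Functor.map_comp, ht]
      exact (DerivedCategory.singleFunctor (ModuleCat.{u} R) 0).map_id S.X₃
  | succ i IH =>
      intro M hM hvan
      haveI := hM
      obtain ⟨k, p, hp⟩ := Module.Finite.exists_fin' R M
      let S : ShortComplex (ModuleCat.{u} R) := ShortComplex.mk
        (ModuleCat.ofHom (LinearMap.ker p).subtype)
        (ModuleCat.ofHom p : ModuleCat.of R (Fin k → R) ⟶ M)
        (by apply ModuleCat.hom_ext; apply LinearMap.ext; intro x; exact x.2)
      have hmono : Mono S.f := by
        rw [ModuleCat.mono_iff_injective]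
        exact Subtype.val_injective
      have hepi : Epi S.g := by
        rw [ModuleCat.epi_iff_surjective]
        exact hp
      have hS : S.ShortExact := by
        refine { exact := ?_, mono_f := hmono, epi_g := hepi }
        rw [ShortComplex.moduleCat_exact_iff]
        intro x hx
        exact ⟨⟨x, hx⟩, rfl⟩
      haveI : Projective S.X₂ :=
        ModuleCat.projective_of_free (M := ModuleCat.of R (Fin k → R)) (Pi.basisFun R (Fin k))
      have hKfp : Module.FinitePresentation R S.X₁ := by
        exact fp_of_fg_submodule hcoh k _ (Module.FinitePresentation.fg_ker p hp)
      have hKvan : ∀ (N : ModuleCat.{u} R) (j : ℕ), i < j → Subsingleton (extGrp S.X₁ N j) := by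
        intro N j hj
        obtain ⟨j, rfl⟩ : ∃ j', j = j' + 1 := ⟨j - 1, by omega⟩
        exact ext_shift S hS (ProjectiveResolution.of S.X₁) N j
          (hvan N (j+2) (by omega))
      have hK : (DerivedCategory.singleFunctor (ModuleCat.{u} R) 0).obj S.X₁ ∈ D :=
        IH S.X₁ hKfp hKvan
      have hT := Pretriangulated.rot_of_distTriang _ hS.singleTriangle_distinguished
      refine hD.ext₂ hS.singleTriangle.rotate hT (single_free_mem D hD hRD k) ?_
      exact hD.shift_mem _ 1 hK

end Main

end GFAux

/-- Theorem 3.5: if `R` is a regular left coherent ring (every finitely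
presented module has finite projective dimension) and `C` is a wide subcategory of
finitely presented `R`-modules, then `g(f(C)) = C`. -/
theorem gf_eq_self_of_regular_coherent (R : Type u) [Ring R]
    [HasDerivedCategory.{w} (ModuleCat.{u} R)]
    (hcoh : IsLeftCoherentRing R)
    (hreg : ∀ M : ModuleCat.{u} R, Module.FinitePresentation R M →
      HasFiniteProjectiveDimension R M)
    (C : Set (ModuleCat.{u} R)) (hC : IsWideSubcategory C)
    (hCfp : C ⊆ finPresModules R) :
    gSet (fSet C) = C := by
  apply subset_antisymm
  · intro M hM
    refine hM C ⟨hC, ?_⟩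
    rintro M' ⟨X, hX, n, ⟨e⟩⟩
    exact hC.mem_of_iso e (hX.2 n)
  · intro M hM
    have hzero : ∀ (Z : ModuleCat.{u} R), IsZero Z → Z ∈ C := fun Z hZ =>
      hC.mem_of_iso ((kernel.ofMono (𝟙 M)).trans hZ.isoZero.symm) (hC.kernel_mem (𝟙 M) hM hM)
    have hsmall : IsSmallObject ((DerivedCategory.singleFunctor (ModuleCat.{u} R) 0).obj M) := by
      intro D hD hRD
      obtain ⟨i, hi⟩ := hreg M (hCfp hM)
      exact GFAux.single_mem_of_fp hcoh D hD hRD i M (hCfp hM) hi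
    have hhom : ∀ n : ℤ, (DerivedCategory.homologyFunctor (ModuleCat.{u} R) n).obj
        ((DerivedCategory.singleFunctor (ModuleCat.{u} R) 0).obj M) ∈ C := by
      intro n
      by_cases hn : n = 0
      · subst hn
        exact hC.mem_of_iso (GFAux.homology_single_zero_iso M).symm hM
      · exact hzero _ (GFAux.isZero_homology_single M n hn)
    intro C' hC'
    exact hC'.2 ⟨(DerivedCategory.singleFunctor (ModuleCat.{u} R) 0).obj M,
      ⟨hsmall, hhom⟩, 0, ⟨GFAux.homology_single_zero_iso M⟩⟩
end

section
/- Let A be an abelian category and let D be a full subcategory of A closed under kernels and cokernels of morphisms between its objects. Let D_1 be the full subcategory of objects N admitting a short exact sequence 0 → N' → N → N'' → 0 with N', N'' ∈ D. If M ∈ D, N ∈ D_1, and f: M → N is any morphism, then the kernel of f lies in D and the cokernel of f lies in D_1. -/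
open CategoryTheory CategoryTheory.Limits

universe v u

/-- A full subcategory (given as a set of objects) of an abelian category is closed
under kernels and cokernels if it is closed under isomorphisms and, for every morphism
between objects of it, the kernel and the cokernel of that morphism belong to it. -/
structure ClosedUnderKerCoker {A : Type u} [Category.{v} A] [Abelian A] (D : Set A) :
    Prop where
  mem_of_iso : ∀ {X Y : A}, (X ≅ Y) → X ∈ D → Y ∈ D
  kernel_mem : ∀ {X Y : A} (f : X ⟶ Y), X ∈ D → Y ∈ D → kernel f ∈ D
  cokernel_mem : ∀ {X Y : A} (f : X ⟶ Y), X ∈ D → Y ∈ D → cokernel f ∈ D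

/-- The full subcategory of extensions of `D`: objects `N` admitting a short exact
sequence `0 → N' → N → N'' → 0` with `N', N'' ∈ D`. -/
def extSet {A : Type u} [Category.{v} A] [Abelian A] (D : Set A) : Set A :=
  {N | ∃ (N' N'' : A) (i : N' ⟶ N) (p : N ⟶ N'') (w : i ≫ p = 0),
    (CategoryTheory.ShortComplex.mk i p w).ShortExact ∧ N' ∈ D ∧ N'' ∈ D}

open CategoryTheory.Abelian CategoryTheory.Abelian.Pseudoelement Pseudoelement in
/-- Lemma 4.2: let `D` be a full subcategory of an abelian category
closed under kernels and cokernels, and let `D₁` be the subcategory of extensions of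
`D`.  If `M ∈ D`, `N ∈ D₁` and `f : M ⟶ N`, then `ker f ∈ D` and `coker f ∈ D₁`. -/
theorem kernel_mem_cokernel_mem_extSet {A : Type u} [Category.{v} A] [Abelian A]
    (D : Set A) (hD : ClosedUnderKerCoker D)
    {M N : A} (hM : M ∈ D) (hN : N ∈ extSet D) (f : M ⟶ N) :
    kernel f ∈ D ∧ cokernel f ∈ extSet D := by
  obtain ⟨N', N'', i, p, w, hS, hN', hN''⟩ := hN
  have hmono : Mono i := hS.mono_f
  have hepi : Epi p := hS.epi_g
  set g : M ⟶ N'' := f ≫ p with hg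
  -- `k : kernel g ⟶ N'` with `k ≫ i = kernel.ι g ≫ f`
  obtain ⟨k, hk⟩ := KernelFork.IsLimit.lift' hS.fIsKernel (kernel.ι g ≫ f)
    (by rw [Category.assoc, ← hg, kernel.condition])
  dsimp at hk
  -- the kernel part
  have hKD : kernel g ∈ D := hD.kernel_mem g hM hN''
  have hkf : kernel k ∈ D := hD.kernel_mem k hKD hN'
  have hlg : kernel.ι f ≫ g = 0 := by rw [hg, ← Category.assoc, kernel.condition, zero_comp]
  have hlk : kernel.lift g (kernel.ι f) hlg ≫ k = 0 := by
    rw [← cancel_mono i, Category.assoc, hk, zero_comp, ← Category.assoc, kernel.lift_ι,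
      kernel.condition]
  have hki : (kernel.ι k ≫ kernel.ι g) ≫ f = 0 := by
    rw [Category.assoc, ← hk, ← Category.assoc, kernel.condition, zero_comp]
  have hiso : kernel k ≅ kernel f := by
    refine ⟨kernel.lift f (kernel.ι k ≫ kernel.ι g) hki,
      kernel.lift k (kernel.lift g (kernel.ι f) hlg) hlk, ?_, ?_⟩
    · rw [← cancel_mono (kernel.ι k), ← cancel_mono (kernel.ι g)]
      simp
    · rw [← cancel_mono (kernel.ι f)]
      simp
  refine ⟨hD.mem_of_iso hiso hkf, ?_⟩
  -- the cokernel part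
  have hwa : k ≫ i ≫ cokernel.π f = 0 := by
    rw [← Category.assoc, hk, Category.assoc, cokernel.condition, comp_zero]
  have hwb : f ≫ p ≫ cokernel.π g = 0 := by
    rw [← Category.assoc, ← hg, cokernel.condition]
  set a : cokernel k ⟶ cokernel f := cokernel.desc k (i ≫ cokernel.π f) hwa with ha
  set b : cokernel f ⟶ cokernel g := cokernel.desc f (p ≫ cokernel.π g) hwb with hb
  have hπa : cokernel.π k ≫ a = i ≫ cokernel.π f := cokernel.π_desc _ _ _
  have hπb : cokernel.π f ≫ b = p ≫ cokernel.π g := cokernel.π_desc _ _ _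
  have hab : a ≫ b = 0 := by
    rw [← cancel_epi (cokernel.π k), comp_zero, ← Category.assoc, hπa, Category.assoc, hπb,
      ← Category.assoc, w, zero_comp]
  refine ⟨cokernel k, cokernel g, a, b, hab, ?_, hD.cokernel_mem k hKD hN',
    hD.cokernel_mem g hM hN''⟩
  have exact_fπ : (ShortComplex.mk f (cokernel.π f) (cokernel.condition f)).Exact :=
    ShortComplex.exact_of_g_is_cokernel _ (cokernelIsCokernel f)
  have exact_gπ : (ShortComplex.mk g (cokernel.π g) (cokernel.condition g)).Exact :=
    ShortComplex.exact_of_g_is_cokernel _ (cokernelIsCokernel g)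
  have exact_ιg : (ShortComplex.mk (kernel.ι g) g (kernel.condition g)).Exact :=
    ShortComplex.exact_of_f_is_kernel _ (kernelIsKernel g)
  have hmonoa : Mono a := by
    apply mono_of_zero_of_map_zero
    intro x hx
    obtain ⟨y, hy⟩ := pseudo_surjective_of_epi (cokernel.π k) x
    have h1 : pseudoApply (cokernel.π f) (pseudoApply i y) = 0 := by
      rw [← Pseudoelement.comp_apply, ← hπa, Pseudoelement.comp_apply, hy, hx]
    obtain ⟨m, hm⟩ := pseudo_exact_of_exact exact_fπ (pseudoApply i y) h1
    have h2 : pseudoApply g m = 0 := by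
      rw [hg, Pseudoelement.comp_apply, hm, ← Pseudoelement.comp_apply, w,
        Pseudoelement.zero_apply]
    obtain ⟨m', hm'⟩ := pseudo_exact_of_exact exact_ιg m h2
    have h3 : pseudoApply i (pseudoApply k m') = pseudoApply i y := by
      rw [← Pseudoelement.comp_apply, hk, Pseudoelement.comp_apply, hm', hm]
    have h4 : pseudoApply k m' = y := pseudo_injective_of_mono i h3
    rw [← hy, ← h4, ← Pseudoelement.comp_apply, cokernel.condition, Pseudoelement.zero_apply]
  have hepib : Epi b := by
    have : Epi (cokernel.π f ≫ b) := by rw [hπb]; infer_instance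
    exact epi_of_epi (cokernel.π f) b
  have hexact : (ShortComplex.mk a b hab).Exact := by
    apply exact_of_pseudo_exact
    intro x hx
    obtain ⟨n, hn⟩ := pseudo_surjective_of_epi (cokernel.π f) x
    have h1 : pseudoApply (cokernel.π g) (pseudoApply p n) = 0 := by
      rw [← Pseudoelement.comp_apply, ← hπb, Pseudoelement.comp_apply, hn, hx]
    obtain ⟨m, hm⟩ := pseudo_exact_of_exact exact_gπ (pseudoApply p n) h1
    have h2 : pseudoApply p (pseudoApply f m) = pseudoApply p n := by
      rw [← Pseudoelement.comp_apply, ← hg, hm]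
    obtain ⟨z, hz0, hz⟩ := sub_of_eq_image p n (pseudoApply f m) h2.symm
    have hπz : pseudoApply (cokernel.π f) z = x := by
      rw [hz _ (cokernel.π f)
        (by rw [← Pseudoelement.comp_apply, cokernel.condition, Pseudoelement.zero_apply]), hn]
    obtain ⟨y, hy⟩ := pseudo_exact_of_exact hS.exact z hz0
    refine ⟨pseudoApply (cokernel.π k) y, ?_⟩
    rw [← Pseudoelement.comp_apply, hπa, Pseudoelement.comp_apply, hy, hπz]
  exact ShortComplex.ShortExact.mk' hexact hmonoa hepib
end

section
/- Let A be an abelian category and let D be a full subcategory of A closed under kernels and cokernels of morphisms between its objects. Let D_1 be the full subcategory of objects admitting a short exact sequence 0 → N' → N → N'' → 0 with N', N'' ∈ D. Then D_1 is also closed under kernels and cokernels: for every morphism f between objects of D_1, both ker f and coker f lie in D_1. -/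
open CategoryTheory CategoryTheory.Limits

universe v u

namespace ExtSetAux

open CategoryTheory.Abelian CategoryTheory.Abelian.Pseudoelement
open scoped Pseudoelement

variable {A : Type u} [Category.{v} A] [Abelian A]

/-- `extSet D` is closed under isomorphisms. -/
lemma extSet_mem_of_iso (D : Set A) {X Y : A} (e : X ≅ Y) (hX : X ∈ extSet D) :
    Y ∈ extSet D := by
  obtain ⟨X', X'', i, p, w, hse, h1, h2⟩ := hX
  refine ⟨X', X'', i ≫ e.hom, e.inv ≫ p, by simp [w], ?_, h1, h2⟩
  exact ShortComplex.shortExact_of_iso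
    (ShortComplex.isoMk (S₁ := ShortComplex.mk i p w) (Iso.refl _) e (Iso.refl _)
      (by simp) (by simp)) hse

/-- If `X ∈ D` and `N ∈ extSet D`, then for every `g : X ⟶ N` we have `kernel g ∈ D`. -/
lemma kernel_mem_of_extSet {D : Set A} (hD : ClosedUnderKerCoker D)
    {X N : A} (hX : X ∈ D) (hN : N ∈ extSet D) (g : X ⟶ N) : kernel g ∈ D := by
  obtain ⟨N', N'', j, q, w, hse, hN1, hN2⟩ := hN
  haveI : Mono j := hse.mono_f
  haveI : Epi q := hse.epi_g
  obtain ⟨u, hu⟩ := KernelFork.IsLimit.lift' hse.fIsKernel (kernel.ι (g ≫ q) ≫ g)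
    (by rw [Category.assoc]; exact kernel.condition _)
  rw [Fork.ι_ofι] at hu
  -- hu : u ≫ j = kernel.ι (g ≫ q) ≫ g
  have hψ₀ : kernel.ι g ≫ g ≫ q = 0 := by
    rw [← Category.assoc, kernel.condition, zero_comp]
  set ψ₀ : kernel g ⟶ kernel (g ≫ q) := kernel.lift (g ≫ q) (kernel.ι g) hψ₀ with hψ₀def
  have hψι : ψ₀ ≫ kernel.ι (g ≫ q) = kernel.ι g := by rw [hψ₀def, kernel.lift_ι]
  have hψu : ψ₀ ≫ u = 0 := by
    rw [← cancel_mono j, Category.assoc, hu, ← Category.assoc, hψι, kernel.condition,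
      zero_comp]
  haveI : Mono ψ₀ := by
    have : Mono (ψ₀ ≫ kernel.ι (g ≫ q)) := by rw [hψι]; infer_instance
    exact mono_of_mono ψ₀ (kernel.ι (g ≫ q))
  have hlim : IsLimit (KernelFork.ofι ψ₀ hψu) := by
    refine KernelFork.IsLimit.ofι' ψ₀ hψu (fun {T} k hk => ?_)
    have h1 : (k ≫ kernel.ι (g ≫ q)) ≫ g = 0 := by
      rw [Category.assoc, ← hu, ← Category.assoc, hk, zero_comp]
    refine ⟨kernel.lift g (k ≫ kernel.ι (g ≫ q)) h1, ?_⟩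
    rw [← cancel_mono (kernel.ι (g ≫ q)), Category.assoc, hψι, kernel.lift_ι]
  have e : kernel u ≅ kernel g :=
    (kernelIsKernel u).conePointUniqueUpToIso hlim
  have hL : kernel (g ≫ q) ∈ D := hD.kernel_mem (g ≫ q) hX hN2
  exact hD.mem_of_iso e (hD.kernel_mem u hL hN1)

/-- If `X ∈ D` and `N ∈ extSet D`, then for every `g : X ⟶ N` we have
`cokernel g ∈ extSet D`. -/
lemma cokernel_mem_extSet {D : Set A} (hD : ClosedUnderKerCoker D)
    {X N : A} (hX : X ∈ D) (hN : N ∈ extSet D) (g : X ⟶ N) : cokernel g ∈ extSet D := by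
  obtain ⟨N', N'', j, q, w, hse, hN1, hN2⟩ := hN
  haveI : Mono j := hse.mono_f
  haveI : Epi q := hse.epi_g
  obtain ⟨u, hu⟩ := KernelFork.IsLimit.lift' hse.fIsKernel (kernel.ι (g ≫ q) ≫ g)
    (by rw [Category.assoc]; exact kernel.condition _)
  rw [Fork.ι_ofι] at hu
  -- hu : u ≫ j = kernel.ι (g ≫ q) ≫ g
  have hα0 : u ≫ j ≫ cokernel.π g = 0 := by
    rw [← Category.assoc, hu, Category.assoc, cokernel.condition, comp_zero]
  set α : cokernel u ⟶ cokernel g := cokernel.desc u (j ≫ cokernel.π g) hα0 with hαdef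
  have hπα : cokernel.π u ≫ α = j ≫ cokernel.π g := by rw [hαdef, cokernel.π_desc]
  have hβ0 : g ≫ q ≫ cokernel.π (g ≫ q) = 0 := by
    rw [← Category.assoc]; exact cokernel.condition _
  set β : cokernel g ⟶ cokernel (g ≫ q) := cokernel.desc g (q ≫ cokernel.π (g ≫ q)) hβ0
    with hβdef
  have hπβ : cokernel.π g ≫ β = q ≫ cokernel.π (g ≫ q) := by rw [hβdef, cokernel.π_desc]
  have wαβ : α ≫ β = 0 := by
    rw [← cancel_epi (cokernel.π u), ← Category.assoc, hπα, Category.assoc, hπβ,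
      ← Category.assoc, w, zero_comp, comp_zero]
  haveI : Epi β := by
    have : Epi (cokernel.π g ≫ β) := by rw [hπβ]; infer_instance
    exact epi_of_epi (cokernel.π g) β
  haveI : Mono α := by
    apply mono_of_zero_of_map_zero
    intro a ha
    obtain ⟨n', hn'⟩ := pseudo_surjective_of_epi (cokernel.π u) a
    have h1 : (cokernel.π g) (j n') = 0 := by
      rw [← Pseudoelement.comp_apply, ← hπα, Pseudoelement.comp_apply, hn']
      exact ha
    obtain ⟨m, hm⟩ := pseudo_exact_of_exact (ShortComplex.exact_cokernel g) _ h1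
    have h2 : (g ≫ q) m = 0 := by
      rw [Pseudoelement.comp_apply, hm, ← Pseudoelement.comp_apply, w]
      exact zero_apply _ _
    obtain ⟨l, hl⟩ := pseudo_exact_of_exact (ShortComplex.exact_kernel (g ≫ q)) _ h2
    have h3 : u l = n' := by
      apply pseudo_injective_of_mono j
      rw [← Pseudoelement.comp_apply, hu, Pseudoelement.comp_apply, hl, hm]
    calc a = (cokernel.π u) n' := hn'.symm
      _ = (cokernel.π u) (u l) := by rw [h3]
      _ = 0 := by
          rw [← Pseudoelement.comp_apply, cokernel.condition]
          exact zero_apply _ _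
  have hcolim : IsColimit (CokernelCofork.ofπ β wαβ) := by
    refine CokernelCofork.IsColimit.ofπ' β wαβ (fun {T} k hk => ?_)
    have h1 : j ≫ cokernel.π g ≫ k = 0 := by
      rw [← Category.assoc, ← hπα, Category.assoc, hk, comp_zero]
    obtain ⟨s, hs⟩ := CokernelCofork.IsColimit.desc' hse.gIsCokernel (cokernel.π g ≫ k) h1
    rw [Cofork.π_ofπ] at hs
    -- hs : q ≫ s = cokernel.π g ≫ k
    have h2 : (g ≫ q) ≫ s = 0 := by
      rw [Category.assoc, hs, ← Category.assoc, cokernel.condition, zero_comp]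
    refine ⟨cokernel.desc (g ≫ q) s h2, ?_⟩
    rw [← cancel_epi (cokernel.π g), ← Category.assoc, hπβ, Category.assoc,
      cokernel.π_desc, hs]
  have hexact : (ShortComplex.mk α β wαβ).Exact :=
    ShortComplex.exact_of_g_is_cokernel _ hcolim
  have hL : kernel (g ≫ q) ∈ D := hD.kernel_mem (g ≫ q) hX hN2
  exact ⟨cokernel u, cokernel (g ≫ q), α, β, wαβ, ShortComplex.ShortExact.mk' hexact inferInstance inferInstance,
    hD.cokernel_mem u hL hN1, hD.cokernel_mem (g ≫ q) hX hN2⟩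

/-- The kernel part of the main statement. -/
lemma kernel_mem_extSet {D : Set A} (hD : ClosedUnderKerCoker D)
    {M N : A} (hM : M ∈ extSet D) (hN : N ∈ extSet D) (f : M ⟶ N) :
    kernel f ∈ extSet D := by
  obtain ⟨M', M'', i, p, wM, hseM, hM1, hM2⟩ := hM
  haveI : Mono i := hseM.mono_f
  haveI : Epi p := hseM.epi_g
  have hK' : kernel (i ≫ f) ∈ D := kernel_mem_of_extSet hD hM1 hN (i ≫ f)
  have hC : cokernel (i ≫ f) ∈ extSet D := cokernel_mem_extSet hD hM1 hN (i ≫ f)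
  obtain ⟨h, hh⟩ := CokernelCofork.IsColimit.desc' hseM.gIsCokernel
    (f ≫ cokernel.π (i ≫ f)) (by rw [← Category.assoc]; exact cokernel.condition _)
  rw [Cofork.π_ofπ] at hh
  -- hh : p ≫ h = f ≫ cokernel.π (i ≫ f)
  have hQ : kernel h ∈ D := kernel_mem_of_extSet hD hM2 hC h
  have ha0 : (kernel.ι (i ≫ f) ≫ i) ≫ f = 0 := by
    rw [Category.assoc]; exact kernel.condition _
  set a : kernel (i ≫ f) ⟶ kernel f := kernel.lift f (kernel.ι (i ≫ f) ≫ i) ha0 with hadef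
  have haι : a ≫ kernel.ι f = kernel.ι (i ≫ f) ≫ i := by rw [hadef, kernel.lift_ι]
  have hb0 : (kernel.ι f ≫ p) ≫ h = 0 := by
    rw [Category.assoc, hh, ← Category.assoc, kernel.condition, zero_comp]
  set b : kernel f ⟶ kernel h := kernel.lift h (kernel.ι f ≫ p) hb0 with hbdef
  have hbι : b ≫ kernel.ι h = kernel.ι f ≫ p := by rw [hbdef, kernel.lift_ι]
  have wab : a ≫ b = 0 := by
    rw [← cancel_mono (kernel.ι h), Category.assoc, hbι, ← Category.assoc, haι,
      Category.assoc, wM, comp_zero, zero_comp]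
  haveI : Mono a := by
    have : Mono (a ≫ kernel.ι f) := by rw [haι]; infer_instance
    exact mono_of_mono a (kernel.ι f)
  have hlim : IsLimit (KernelFork.ofι a wab) := by
    refine KernelFork.IsLimit.ofι' a wab (fun {T} k hk => ?_)
    have h1 : (k ≫ kernel.ι f) ≫ p = 0 := by
      rw [Category.assoc, ← hbι, ← Category.assoc, hk, zero_comp]
    obtain ⟨s, hs⟩ := KernelFork.IsLimit.lift' hseM.fIsKernel (k ≫ kernel.ι f) h1
    rw [Fork.ι_ofι] at hs
    -- hs : s ≫ i = k ≫ kernel.ι f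
    have h2 : s ≫ i ≫ f = 0 := by
      rw [← Category.assoc, hs, Category.assoc, kernel.condition, comp_zero]
    refine ⟨kernel.lift (i ≫ f) s h2, ?_⟩
    rw [← cancel_mono (kernel.ι f), Category.assoc, haι, ← Category.assoc,
      kernel.lift_ι, hs]
  have hexact : (ShortComplex.mk a b wab).Exact :=
    ShortComplex.exact_of_f_is_kernel _ hlim
  haveI : Epi b := by
    apply epi_of_pseudo_surjective
    intro x
    obtain ⟨m, hm⟩ := pseudo_surjective_of_epi p ((kernel.ι h) x)
    -- hm : p m = (kernel.ι h) x
    have h1 : (cokernel.π (i ≫ f)) (f m) = 0 := by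
      rw [← Pseudoelement.comp_apply, ← hh, Pseudoelement.comp_apply, hm, ← Pseudoelement.comp_apply, kernel.condition]
      exact zero_apply _ _
    obtain ⟨m', hm'⟩ := pseudo_exact_of_exact (ShortComplex.exact_cokernel (i ≫ f)) _ h1
    -- hm' : (i ≫ f) m' = f m
    have hfeq : f m = f (i m') := by rw [← Pseudoelement.comp_apply, hm']
    obtain ⟨z, hz1, hz2⟩ := sub_of_eq_image f m (i m') hfeq
    obtain ⟨k, hk⟩ := pseudo_exact_of_exact (ShortComplex.exact_kernel f) _ hz1
    -- hk : kernel.ι f k = z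
    refine ⟨k, pseudo_injective_of_mono (kernel.ι h) ?_⟩
    have e1 : (kernel.ι h) (b k) = p z := by
      rw [← Pseudoelement.comp_apply, hbι, Pseudoelement.comp_apply, hk]
    have hpz : p z = p m := by
      refine hz2 _ p ?_
      rw [← Pseudoelement.comp_apply, wM]
      exact zero_apply _ _
    rw [e1, hpz, hm]
  exact ⟨kernel (i ≫ f), kernel h, a, b, wab, ShortComplex.ShortExact.mk' hexact inferInstance inferInstance,
    hK', hQ⟩

/-- The opposite of a closed subcategory is closed. -/
lemma ClosedUnderKerCoker.op {D : Set A} (hD : ClosedUnderKerCoker D) :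
    ClosedUnderKerCoker {X : Aᵒᵖ | Opposite.unop X ∈ D} where
  mem_of_iso e hX := hD.mem_of_iso e.unop.symm hX
  kernel_mem f hX hY :=
    hD.mem_of_iso (kernelOpOp f.unop).unop (hD.cokernel_mem f.unop hY hX)
  cokernel_mem f hX hY :=
    hD.mem_of_iso (cokernelOpOp f.unop).unop (hD.kernel_mem f.unop hY hX)

lemma op_mem_extSet {D : Set A} {M : A} (hM : M ∈ extSet D) :
    Opposite.op M ∈ extSet {X : Aᵒᵖ | Opposite.unop X ∈ D} := by
  obtain ⟨M', M'', i, p, w, hse, h1, h2⟩ := hM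
  exact ⟨Opposite.op M'', Opposite.op M', p.op, i.op,
    by rw [← op_comp, w, op_zero], hse.op, h2, h1⟩

lemma unop_mem_extSet {D : Set A} {M : Aᵒᵖ}
    (hM : M ∈ extSet {X : Aᵒᵖ | Opposite.unop X ∈ D}) :
    Opposite.unop M ∈ extSet D := by
  obtain ⟨M', M'', i, p, w, hse, h1, h2⟩ := hM
  exact ⟨Opposite.unop M'', Opposite.unop M', p.unop, i.unop,
    by rw [← unop_comp, w, unop_zero], hse.unop, h2, h1⟩

end ExtSetAux

/-- Proposition 4.3: let `D` be a full subcategory of an abelian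
category closed under kernels and cokernels, and let `D₁` be the subcategory of
extensions of `D`.  Then `D₁` is also closed under kernels and cokernels: for every
morphism `f` between objects of `D₁`, both `ker f` and `coker f` lie in `D₁`. -/
theorem extSet_closed_under_ker_coker {A : Type u} [Category.{v} A] [Abelian A]
    (D : Set A) (hD : ClosedUnderKerCoker D)
    {M N : A} (hM : M ∈ extSet D) (hN : N ∈ extSet D) (f : M ⟶ N) :
    kernel f ∈ extSet D ∧ cokernel f ∈ extSet D := by
  constructor
  · exact ExtSetAux.kernel_mem_extSet hD hM hN f
  · have h1 := ExtSetAux.kernel_mem_extSet (ExtSetAux.ClosedUnderKerCoker.op hD)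
      (ExtSetAux.op_mem_extSet hN) (ExtSetAux.op_mem_extSet hM) f.op
    have h2 := ExtSetAux.extSet_mem_of_iso _ (kernelOpOp f) h1
    exact ExtSetAux.unop_mem_extSet h2
end
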